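/- For every compact set K ⊆ ℍ^n, the ℋ_RSL(ℍ^n)-convex hull K̂ of K is a compact subset of ℍ^n. -/

import Mathlib

/-!
Every RSS function is continuous, so the hull is an intersection of closed sublevel sets.
The coordinate functions `z ↦ z k` are RSS, so the hull lies in the sup-norm ball of any
radius bounding `K`. Closed and bounded subsets of the finite-dimensional space `ℍ^n` are compact.
-/

noncomputable section

open scoped ComplexConjugate

/-- The first complex component of a quaternion `q = t + u·j`, identifying `ℂ` with the
real span of `1` and `i` inside the quaternions: `t = q.re + q.imI * I`. -/
def qt (q : Quaternion ℝ) : ℂ := ⟨q.re, q.imI⟩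

/-- The second complex component of a quaternion `q = t + u·j`: `u = q.imJ + q.imK * I`. -/
def qu (q : Quaternion ℝ) : ℂ := ⟨q.imJ, q.imK⟩

/-- The quaternion `t + u·j` built from two complex numbers. -/
def mkQ (t u : ℂ) : Quaternion ℝ := ⟨t.re, t.im, u.re, u.im⟩

/-- `f : ℍ^n → ℍ` is right superlinearly superdifferentiable (RSS) on `U`:
writing `f = f₁ + f₂·j` with `f₁ = qt ∘ f`, `f₂ = qu ∘ f`, and each coordinate
`z_k = t_k + u_k·j`, the component `f₁` is jointly holomorphic in `(t₁,…,t_n)` and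
antiholomorphic in `(u₁,…,u_n)` (i.e. `(t, v) ↦ f₁` at `u_k = conj (v_k)` is jointly
holomorphic), and `f₂` is jointly holomorphic in the `u`'s and antiholomorphic in the `t`'s. -/
def RSS {n : ℕ} (U : Set (Fin n → Quaternion ℝ))
    (f : (Fin n → Quaternion ℝ) → Quaternion ℝ) : Prop :=
  DifferentiableOn ℂ
    (fun p : (Fin n → ℂ) × (Fin n → ℂ) =>
      qt (f fun k => mkQ (p.1 k) (conj (p.2 k))))
    {p | (fun k => mkQ (p.1 k) (conj (p.2 k))) ∈ U} ∧
  DifferentiableOn ℂ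
    (fun p : (Fin n → ℂ) × (Fin n → ℂ) =>
      qu (f fun k => mkQ (conj (p.1 k)) (p.2 k)))
    {p | (fun k => mkQ (conj (p.1 k)) (p.2 k)) ∈ U}

/-- The `ℋ_RSL(ℍ^n)`-convex hull of a compact set `K ⊆ ℍ^n`:
all `z` with `‖f z‖ ≤ sup_{ζ ∈ K} ‖f ζ‖` for every `f` RSS on all of `ℍ^n`. -/
def rslHull {n : ℕ} (K : Set (Fin n → Quaternion ℝ)) : Set (Fin n → Quaternion ℝ) :=
  {z | ∀ f : (Fin n → Quaternion ℝ) → Quaternion ℝ,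
    RSS Set.univ f → ‖f z‖ ≤ ⨆ ζ ∈ K, ‖f ζ‖}

lemma mkQ_qt_qu (q : Quaternion ℝ) : mkQ (qt q) (qu q) = q := rfl

@[fun_prop]
lemma continuous_qt : Continuous qt :=
  Complex.equivRealProdCLM.symm.continuous.comp
    (Quaternion.continuous_re.prodMk Quaternion.continuous_imI)

@[fun_prop]
lemma continuous_qu : Continuous qu :=
  Complex.equivRealProdCLM.symm.continuous.comp
    (Quaternion.continuous_imJ.prodMk Quaternion.continuous_imK)

lemma continuous_mkQ : Continuous fun p : ℂ × ℂ => mkQ p.1 p.2 :=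
  Quaternion.linearIsometryEquivTuple.symm.continuous.comp
    (f := fun p : ℂ × ℂ => WithLp.toLp 2 ![p.1.re, p.1.im, p.2.re, p.2.im]) (by fun_prop)

lemma continuousOn_iff_continuousOn_qt_qu {X : Type*} [TopologicalSpace X]
    {g : X → Quaternion ℝ} {s : Set X} :
    ContinuousOn g s ↔ ContinuousOn (fun x => qt (g x)) s ∧ ContinuousOn (fun x => qu (g x)) s :=
  ⟨fun h => ⟨continuous_qt.comp_continuousOn h, continuous_qu.comp_continuousOn h⟩,
    fun h => continuous_mkQ.comp_continuousOn (h.1.prodMk h.2)⟩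

namespace RSS

variable {n : ℕ} {U : Set (Fin n → Quaternion ℝ)} {f : (Fin n → Quaternion ℝ) → Quaternion ℝ}

/-- `z ↦ (qt ∘ z, conj ∘ qu ∘ z)` is a right inverse of the parametrisation in the first
half of `RSS`, so holomorphy there gives continuity of `qt ∘ f`. -/
lemma continuousOn_qt (hf : RSS U f) : ContinuousOn (fun z => qt (f z)) U := by
  have hinv (z : Fin n → Quaternion ℝ) :
      (fun k => mkQ (qt (z k)) (conj (conj (qu (z k))))) = z := by
    simp only [Complex.conj_conj, mkQ_qt_qu]
  have hcont : Continuous fun z : Fin n → Quaternion ℝ =>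
      ((fun k => qt (z k), fun k => conj (qu (z k))) : (Fin n → ℂ) × (Fin n → ℂ)) := by
    fun_prop
  refine (hf.1.continuousOn.comp hcont.continuousOn fun z hz => ?_).congr fun z _ => ?_
  · rwa [Set.mem_ofPred_eq, hinv]
  · simp only [Function.comp_apply, hinv]

lemma continuousOn_qu (hf : RSS U f) : ContinuousOn (fun z => qu (f z)) U := by
  have hinv (z : Fin n → Quaternion ℝ) :
      (fun k => mkQ (conj (conj (qt (z k)))) (qu (z k))) = z := by
    simp only [Complex.conj_conj, mkQ_qt_qu]
  have hcont : Continuous fun z : Fin n → Quaternion ℝ =>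
      ((fun k => conj (qt (z k)), fun k => qu (z k)) : (Fin n → ℂ) × (Fin n → ℂ)) := by
    fun_prop
  refine (hf.2.continuousOn.comp hcont.continuousOn fun z hz => ?_).congr fun z _ => ?_
  · rwa [Set.mem_ofPred_eq, hinv]
  · simp only [Function.comp_apply, hinv]

lemma continuousOn (hf : RSS U f) : ContinuousOn f U :=
  continuousOn_iff_continuousOn_qt_qu.2 ⟨hf.continuousOn_qt, hf.continuousOn_qu⟩

end RSS

lemma rss_apply {n : ℕ} (U : Set (Fin n → Quaternion ℝ)) (k : Fin n) :
    RSS U fun z => z k :=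
  ⟨((ContinuousLinearMap.proj k).comp
      (ContinuousLinearMap.fst ℂ (Fin n → ℂ) (Fin n → ℂ))).differentiable.differentiableOn,
    ((ContinuousLinearMap.proj k).comp
      (ContinuousLinearMap.snd ℂ (Fin n → ℂ) (Fin n → ℂ))).differentiable.differentiableOn⟩

lemma isClosed_rslHull {n : ℕ} (K : Set (Fin n → Quaternion ℝ)) : IsClosed (rslHull K) := by
  have hHull : rslHull K = ⋂ f, ⋂ (_ : RSS Set.univ f), {z | ‖f z‖ ≤ ⨆ ζ ∈ K, ‖f ζ‖} := by
    ext z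
    simp [rslHull]
  rw [hHull]
  exact isClosed_iInter fun f => isClosed_iInter fun hf =>
    isClosed_le (continuous_norm.comp (continuousOn_univ.1 hf.continuousOn)) continuous_const

lemma rslHull_subset_closedBall {n : ℕ} {K : Set (Fin n → Quaternion ℝ)} {R : ℝ} (hR : 0 ≤ R)
    (hK : ∀ ζ ∈ K, ‖ζ‖ ≤ R) : rslHull K ⊆ Metric.closedBall 0 R := by
  intro z hz
  rw [mem_closedBall_zero_iff, pi_norm_le_iff_of_nonneg hR]
  intro k
  -- for `ζ ∉ K` the inner supremum is over the empty type, hence `0 ≤ R`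
  refine (hz _ (rss_apply Set.univ k)).trans <|
    Real.iSup_le (fun ζ => Real.iSup_le (fun hζ => ?_) hR) hR
  exact (norm_le_pi_norm ζ k).trans (hK ζ hζ)

lemma Bornology.IsBounded.rslHull {n : ℕ} {K : Set (Fin n → Quaternion ℝ)}
    (hK : Bornology.IsBounded K) : Bornology.IsBounded (rslHull K) :=
  let ⟨_, hR, hKR⟩ := hK.exists_pos_norm_le
  Metric.isBounded_closedBall.subset (rslHull_subset_closedBall hR.le hKR)

/-- Note 2.18.1 (quaternion version of Corollary 1.3.4 of Henkin–Leiterer): for each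
compact `K ⊆ ℍ^n`, the `ℋ_RSL(ℍ^n)`-convex hull of `K` is compact. -/
theorem isCompact_rslHull {n : ℕ} (K : Set (Fin n → Quaternion ℝ))
    (hK : IsCompact K) : IsCompact (rslHull K) :=
  Metric.isCompact_of_isClosed_isBounded (isClosed_rslHull K) hK.isBounded.rslHull
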